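/- Let N ≥ 2 and let Y be a configuration of N distinct points on the loop of circumference 2π that is not congruent to the equidistant configuration Ỹ. Then there exists α₀ > 0 such that for every α > α₀ one has λ₁(α, Y) < λ₁(α, Ỹ). -/

import Mathlib

/-- Periodic extension of a configuration `y` on the loop of circumference `2π`. -/
noncomputable def periodicExt {N : ℕ} (y : Fin N → ℝ) (k : ℕ) : ℝ :=
  if h : 0 < N then y ⟨k % N, Nat.mod_lt k h⟩ + 2 * Real.pi * (k / N : ℕ) else 0

/-- The `j`-th cyclic gap of the configuration `y` on the loop of circumference `2π`. -/
noncomputable def cyclicGap {N : ℕ} (y : Fin N → ℝ) (j : Fin N) : ℝ :=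
  periodicExt y ((j : ℕ) + 1) - periodicExt y (j : ℕ)

/-- A configuration is congruent to the equidistant one iff all cyclic gaps are `2π/N`. -/
def isEquidistant {N : ℕ} (y : Fin N → ℝ) : Prop :=
  ∀ j : Fin N, cyclicGap y j = 2 * Real.pi / N

/-- The ground-state energy `λ₁(α, Y)` of `−d²/dx² + α ∑_j δ(x − y_j)` on the loop of
circumference `2π`, defined as the infimum of the Rayleigh quotient
`(∫ ψ′² + α ∑_j ψ(y_j)²) / ∫ ψ²` over smooth `2π`-periodic `ψ ≢ 0`. -/
noncomputable def lambda1 (N : ℕ) (α : ℝ) (y : Fin N → ℝ) : ℝ :=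
  sInf { r : ℝ | ∃ ψ : ℝ → ℝ, ContDiff ℝ (⊤ : ℕ∞) ψ ∧ (∀ x, ψ (x + 2 * Real.pi) = ψ x) ∧ ψ ≠ 0 ∧
    r = ((∫ x in (0:ℝ)..(2 * Real.pi), (deriv ψ x) ^ 2) + α * ∑ j, (ψ (y j)) ^ 2) /
        ∫ x in (0:ℝ)..(2 * Real.pi), (ψ x) ^ 2 }

/-- The equidistant configuration `ỹ_j = π(2j−1)/N`, `j = 1, …, N`. -/
noncomputable def equidistantConfig (N : ℕ) : Fin N → ℝ :=
  fun j => Real.pi * (2 * (j : ℕ) + 1) / N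


set_option maxHeartbeats 1600000

open Complex intervalIntegral Real Finset Polynomial

lemma integral_exp_int (n : ℤ) :
    ∫ x in (0:ℝ)..(2*Real.pi), Complex.exp (n * x * I) =
      if n = 0 then (2*Real.pi : ℂ) else 0 := by
  rcases eq_or_ne n 0 with h | h
  · simp [h]
  · rw [if_neg h]
    have hni : (n : ℂ) * I ≠ 0 := by simp [Complex.ext_iff, h]
    have hd : ∀ x ∈ Set.uIcc (0:ℝ) (2*Real.pi),
        HasDerivAt (fun x : ℝ => Complex.exp (n * x * I) / (n * I))
          (Complex.exp (n * x * I)) x := by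
      intro x _
      have h1 : HasDerivAt (fun x : ℝ => (n : ℂ) * x * I) (n * I) x := by
        simpa using ((Complex.ofRealCLM.hasDerivAt (x := x)).const_mul (n : ℂ)).mul_const I
      have h2 := ((Complex.hasDerivAt_exp _).comp x h1).div_const ((n:ℂ) * I)
      have : (n:ℂ) * I * cexp (↑n * ↑x * I) / (↑n * I) = cexp (↑n * ↑x * I) := by
        field_simp
      rw [mul_comm] at this
      simpa [this] using h2
    have hi : IntervalIntegrable (fun x : ℝ => Complex.exp (n * x * I))
        MeasureTheory.volume 0 (2*Real.pi) := by
      apply Continuous.intervalIntegrable; continuity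
    rw [intervalIntegral.integral_eq_sub_of_hasDerivAt hd hi]
    have h2pi : Complex.exp (n * (2*Real.pi : ℝ) * I) = 1 := by
      have := Complex.exp_int_mul_two_pi_mul_I n
      rw [← this]
      push_cast
      ring_nf
    rw [h2pi]
    simp

lemma parseval_trig (M : ℕ) (b : ℕ → ℂ) :
    ∫ x in (0:ℝ)..(2*Real.pi),
        Complex.normSq (∑ k ∈ range M, b k * Complex.exp ((k:ℂ) * (x:ℂ) * I)) =
      2*Real.pi * ∑ k ∈ range M, Complex.normSq (b k) := by
  set F : ℝ → ℂ := fun x => ∑ k ∈ range M, b k * Complex.exp ((k:ℂ) * (x:ℂ) * I) with hF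
  have hterm : ∀ (k l : ℕ) (x : ℝ),
      (b k * Complex.exp ((k:ℂ) * (x:ℂ) * I)) * (starRingEnd ℂ) (b l * Complex.exp ((l:ℂ) * (x:ℂ) * I)) =
      (b k * (starRingEnd ℂ) (b l)) * Complex.exp ((((k:ℤ) - (l:ℤ) : ℤ) : ℂ) * x * I) := by
    intro k l x
    rw [map_mul, ← Complex.exp_conj]
    have hc : (starRingEnd ℂ) ((l:ℂ) * x * I) = -((l:ℂ) * x * I) := by
      simp [Complex.ext_iff]
    rw [hc, mul_mul_mul_comm, ← Complex.exp_add]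
    congr 2
    push_cast
    ring
  have key : ∀ x : ℝ, (Complex.normSq (F x) : ℂ) =
      ∑ k ∈ range M, ∑ l ∈ range M,
        (b k * (starRingEnd ℂ) (b l)) * Complex.exp ((((k:ℤ) - (l:ℤ) : ℤ) : ℂ) * x * I) := by
    intro x
    rw [← Complex.mul_conj, hF]
    simp only [map_sum, Finset.sum_mul_sum]
    exact Finset.sum_congr rfl fun k _ => Finset.sum_congr rfl fun l _ => hterm k l x
  have hcont : ∀ (k l : ℕ), Continuous (fun x : ℝ =>
      (b k * (starRingEnd ℂ) (b l)) * Complex.exp ((((k:ℤ) - (l:ℤ) : ℤ) : ℂ) * x * I)) := by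
    intro k l; continuity
  have hC : (↑(∫ x in (0:ℝ)..(2*Real.pi), Complex.normSq (F x)) : ℂ) =
      ∑ k ∈ range M, ∑ l ∈ range M,
        (b k * (starRingEnd ℂ) (b l)) *
          ∫ x in (0:ℝ)..(2*Real.pi), Complex.exp ((((k:ℤ) - (l:ℤ) : ℤ) : ℂ) * x * I) := by
    rw [← intervalIntegral.integral_ofReal]
    simp only [key]
    rw [intervalIntegral.integral_finset_sum]
    · refine Finset.sum_congr rfl fun k _ => ?_
      rw [intervalIntegral.integral_finset_sum]
      · exact Finset.sum_congr rfl fun l _ => intervalIntegral.integral_const_mul _ _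
      · intro l _; exact (hcont k l).intervalIntegrable _ _
    · intro k _
      apply Continuous.intervalIntegrable
      exact continuous_finset_sum _ fun l _ => hcont k l
  have hD : (↑(∫ x in (0:ℝ)..(2*Real.pi), Complex.normSq (F x)) : ℂ) =
      (2*(Real.pi:ℂ)) * ∑ k ∈ range M, (Complex.normSq (b k) : ℂ) := by
    rw [hC, Finset.mul_sum]
    refine Finset.sum_congr rfl fun k hk => ?_
    rw [Finset.sum_eq_single k]
    · rw [integral_exp_int, if_pos (by ring : (k:ℤ) - (k:ℤ) = 0), Complex.mul_conj]
      push_cast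
      ring
    · intro l _ hlk
      rw [integral_exp_int, if_neg (by omega : ¬ ((k:ℤ) - (l:ℤ) = 0)), mul_zero]
    · intro h; exact absurd hk h
  rw [← Complex.ofReal_inj]
  rw [hD]
  push_cast
  ring

lemma interval_lb (lam ℓ : ℝ) (hlam : 0 < lam) (hℓ : 0 < ℓ)
    (hlt : Real.sqrt lam * ℓ < Real.pi) (a : ℝ) (ψ : ℝ → ℝ) (hψ : ContDiff ℝ (⊤ : ℕ∞) ψ) :
    lam * (∫ x in a..(a+ℓ), ψ x ^ 2)
      - (Real.sqrt lam * (Real.cos ((Real.pi - Real.sqrt lam * ℓ)/2) / Real.sin ((Real.pi - Real.sqrt lam * ℓ)/2)))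
        * (ψ a ^ 2 + ψ (a+ℓ) ^ 2)
      ≤ ∫ x in a..(a+ℓ), (deriv ψ x) ^ 2 := by
  set s := Real.sqrt lam with hs
  have hs0 : 0 < s := Real.sqrt_pos.mpr hlam
  have hs2 : s ^ 2 = lam := Real.sq_sqrt hlam.le
  set θ := (Real.pi - s * ℓ)/2 with hθ
  have hθ0 : 0 < θ := by
    have : s * ℓ < Real.pi := hlt
    simp only [hθ]; linarith
  have hθ2 : θ < Real.pi/2 := by
    have : 0 < s * ℓ := mul_pos hs0 hℓ
    simp only [hθ]; linarith
  set w : ℝ → ℝ := fun x => s * (x - a) + θ with hw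
  have hwmem : ∀ x ∈ Set.uIcc a (a+ℓ), θ ≤ w x ∧ w x ≤ Real.pi - θ := by
    intro x hx
    rw [Set.uIcc_of_le (by linarith : a ≤ a + ℓ)] at hx
    obtain ⟨h1, h2⟩ := hx
    constructor
    · have : 0 ≤ s * (x - a) := mul_nonneg hs0.le (by linarith)
      simp only [hw]; linarith
    · have : s * (x - a) ≤ s * ℓ := by
        apply mul_le_mul_of_nonneg_left (by linarith) hs0.le
      have hpi : s * ℓ + θ = Real.pi - θ := by simp only [hθ]; ring
      simp only [hw]; linarith
  have hsinpos : ∀ x ∈ Set.uIcc a (a+ℓ), 0 < Real.sin (w x) := by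
    intro x hx
    obtain ⟨h1, h2⟩ := hwmem x hx
    exact Real.sin_pos_of_pos_of_lt_pi (by linarith) (by linarith)
  set g : ℝ → ℝ := fun x => s * (Real.cos (w x) / Real.sin (w x)) with hg
  have hwD : ∀ x, HasDerivAt w s x := by
    intro x
    exact (((hasDerivAt_id x).sub_const a).const_mul s |>.add_const θ).congr_deriv (by ring)
  have hgD : ∀ x ∈ Set.uIcc a (a+ℓ), HasDerivAt g (-lam - g x ^ 2) x := by
    intro x hx
    have hsin := hsinpos x hx
    have hcosD : HasDerivAt (fun y => Real.cos (w y)) (-Real.sin (w x) * s) x :=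
      (Real.hasDerivAt_cos (w x)).comp x (hwD x)
    have hsinD : HasDerivAt (fun y => Real.sin (w y)) (Real.cos (w x) * s) x :=
      (Real.hasDerivAt_sin (w x)).comp x (hwD x)
    have hdiv := (hcosD.div hsinD hsin.ne')
    have := hdiv.const_mul s
    refine this.congr_deriv (Eq.symm ?_)
    have h1 : Real.sin (w x) ^ 2 + Real.cos (w x) ^ 2 = 1 := by
      rw [add_comm]; exact Real.cos_sq_add_sin_sq (w x)
    simp only [hg]
    field_simp
    nlinarith [hs2]
  -- G = g * ψ^2 and its derivative
  set ψ' : ℝ → ℝ := deriv ψ with hψ'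
  have hψD : ∀ x, HasDerivAt ψ (ψ' x) x := fun x =>
    (hψ.differentiable (by simp) x).hasDerivAt
  have hψ'c : Continuous ψ' := (hψ.continuous_deriv (by simp))
  set G : ℝ → ℝ := fun x => g x * ψ x ^ 2 with hG
  set G' : ℝ → ℝ := fun x => (-lam - g x ^ 2) * ψ x ^ 2 + g x * (2 * ψ x * ψ' x) with hG'
  have hGD : ∀ x ∈ Set.uIcc a (a+ℓ), HasDerivAt G (G' x) x := by
    intro x hx
    have h1 : HasDerivAt (fun y => ψ y ^ 2) (2 * ψ x * ψ' x) x := by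
      simpa [mul_comm, mul_assoc] using (hψD x).fun_pow 2
    have := (hgD x hx).fun_mul h1
    simpa [hG, hG'] using this
  -- continuity of g on the interval
  have hgc : ContinuousOn g (Set.uIcc a (a+ℓ)) := by
    apply ContinuousOn.mul continuousOn_const
    apply ContinuousOn.div
    · exact (Real.continuous_cos.comp (by continuity)).continuousOn
    · exact (Real.continuous_sin.comp (by continuity)).continuousOn
    · intro x hx; exact (hsinpos x hx).ne'
  have hψc : Continuous ψ := hψ.continuous
  have hG'i : IntervalIntegrable G' MeasureTheory.volume a (a+ℓ) := by
    apply ContinuousOn.intervalIntegrable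
    apply ContinuousOn.add
    · have h1 : ContinuousOn (fun x => (-lam - g x ^ 2)) (Set.uIcc a (a+ℓ)) :=
        (continuousOn_const.sub (hgc.pow 2))
      exact h1.mul (hψ.continuous.continuousOn.pow 2)
    · exact hgc.mul ((by fun_prop : Continuous fun x => 2 * ψ x * ψ' x)).continuousOn
  have hFTC : ∫ x in a..(a+ℓ), G' x = G (a+ℓ) - G a :=
    intervalIntegral.integral_eq_sub_of_hasDerivAt hGD hG'i
  -- nonnegativity of the square
  have hsq : ∀ x ∈ Set.uIcc a (a+ℓ),
      G' x + lam * ψ x ^ 2 ≤ ψ' x ^ 2 := by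
    intro x hx
    have h : ψ' x ^ 2 - (G' x + lam * ψ x ^ 2) = (ψ' x - g x * ψ x) ^ 2 := by
      simp only [hG']; ring
    nlinarith [sq_nonneg (ψ' x - g x * ψ x)]
  have hab : a ≤ a + ℓ := by linarith
  have hint1 : IntervalIntegrable (fun x => ψ x ^ 2) MeasureTheory.volume a (a+ℓ) :=
    ((hψc.pow 2).intervalIntegrable _ _)
  have hint2 : IntervalIntegrable (fun x => ψ' x ^ 2) MeasureTheory.volume a (a+ℓ) :=
    ((hψ'c.pow 2).intervalIntegrable _ _)
  have hmono : (∫ x in a..(a+ℓ), (G' x + lam * ψ x ^ 2)) ≤ ∫ x in a..(a+ℓ), ψ' x ^ 2 := by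
    apply intervalIntegral.integral_mono_on hab _ hint2
    · intro x hx
      exact hsq x (by rw [Set.uIcc_of_le hab]; exact hx)
    · exact hG'i.add (hint1.const_mul lam)
  rw [intervalIntegral.integral_add hG'i (hint1.const_mul lam)] at hmono
  rw [intervalIntegral.integral_const_mul] at hmono
  rw [hFTC] at hmono
  -- endpoint values
  have hwa : w a = θ := by show s * (a - a) + θ = θ; ring
  have hwb : w (a+ℓ) = Real.pi - θ := by
    show s * (a + ℓ - a) + θ = Real.pi - θ
    rw [hθ]; ring
  have hga : g a = s * (Real.cos θ / Real.sin θ) := by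
    show s * (Real.cos (w a) / Real.sin (w a)) = _
    rw [hwa]
  have hgb : g (a+ℓ) = -(s * (Real.cos θ / Real.sin θ)) := by
    show s * (Real.cos (w (a+ℓ)) / Real.sin (w (a+ℓ))) = _
    rw [hwb, Real.cos_pi_sub, Real.sin_pi_sub]
    ring
  have hGa : G a = s * (Real.cos θ / Real.sin θ) * ψ a ^ 2 := by
    show g a * ψ a ^ 2 = _
    rw [hga]
  have hGb : G (a+ℓ) = -(s * (Real.cos θ / Real.sin θ)) * ψ (a+ℓ) ^ 2 := by
    show g (a+ℓ) * ψ (a+ℓ) ^ 2 = _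
    rw [hgb]
  rw [hGa, hGb] at hmono
  have : s * (Real.cos θ / Real.sin θ) * (ψ a ^ 2 + ψ (a+ℓ) ^ 2) =
      -((-(s * (Real.cos θ / Real.sin θ)) * ψ (a+ℓ) ^ 2 - s * (Real.cos θ / Real.sin θ) * ψ a ^ 2)) := by ring
  linarith [hmono]

lemma sq_integral_pos (ψ : ℝ → ℝ) (hc : Continuous ψ)
    (hper : ∀ x, ψ (x + 2*Real.pi) = ψ x) (hne : ψ ≠ 0) :
    0 < ∫ x in (0:ℝ)..(2*Real.pi), ψ x ^ 2 := by
  have h2pi : (0:ℝ) < 2*Real.pi := by positivity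
  obtain ⟨x₀, hx₀⟩ : ∃ x, ψ x ≠ 0 := by
    by_contra h
    push_neg at h
    exact hne (funext h)
  have hP : Function.Periodic ψ (2*Real.pi) := hper
  set n : ℤ := ⌊x₀ / (2*Real.pi)⌋ with hn
  set x₁ : ℝ := x₀ - n * (2*Real.pi) with hx₁
  have hψx₁ : ψ x₁ = ψ x₀ := hP.sub_int_mul_eq n
  have hmem : x₁ ∈ Set.Icc (0:ℝ) (2*Real.pi) := by
    have h1 : (n:ℝ) ≤ x₀ / (2*Real.pi) := Int.floor_le _
    have h2 : x₀ / (2*Real.pi) < n + 1 := Int.lt_floor_add_one _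
    have h1' : (n:ℝ) * (2*Real.pi) ≤ x₀ := by
      rw [← le_div_iff₀ h2pi]; exact h1
    have h2' : x₀ < ((n:ℝ) + 1) * (2*Real.pi) := by
      rw [← div_lt_iff₀ h2pi]; exact h2
    constructor
    · rw [hx₁]; linarith
    · rw [hx₁]; nlinarith
  apply intervalIntegral.integral_pos h2pi
  · exact ((hc.pow 2).continuousOn)
  · intro x _; positivity
  · exact ⟨x₁, hmem, by rw [hψx₁]; positivity⟩

lemma periodic_deriv (ψ : ℝ → ℝ) (hper : ∀ x, ψ (x + 2*Real.pi) = ψ x) (x : ℝ) :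
    deriv ψ (x + 2*Real.pi) = deriv ψ x := by
  have : (fun y => ψ (y + 2*Real.pi)) = ψ := funext hper
  calc deriv ψ (x + 2*Real.pi) = deriv (fun y => ψ (y + 2*Real.pi)) x := by
        rw [deriv_comp_add_const]
      _ = deriv ψ x := by rw [this]

lemma equi_lower (N : ℕ) (hN : 2 ≤ N) (lam : ℝ) (hlam : 0 < lam)
    (hlt : lam < (N:ℝ)^2/4) (α : ℝ)
    (hα : 2 * (Real.sqrt lam *
      (Real.cos ((Real.pi - Real.sqrt lam * (2*Real.pi/N))/2) /
       Real.sin ((Real.pi - Real.sqrt lam * (2*Real.pi/N))/2))) ≤ α) :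
    lam ≤ lambda1 N α (equidistantConfig N) := by
  have hNpos : (0:ℝ) < N := by positivity
  have h2pi : (0:ℝ) < 2*Real.pi := by positivity
  set ℓ : ℝ := 2*Real.pi/N with hℓdef
  have hℓ : 0 < ℓ := by positivity
  have hs : Real.sqrt lam * ℓ < Real.pi := by
    have h1 : Real.sqrt lam < N/2 := by
      rw [show (N:ℝ)/2 = Real.sqrt (((N:ℝ)/2)^2) by
        rw [Real.sqrt_sq (by positivity)]]
      apply Real.sqrt_lt_sqrt hlam.le
      nlinarith
    calc Real.sqrt lam * ℓ < (N/2) * ℓ := by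
          apply mul_lt_mul_of_pos_right h1 hℓ
      _ = Real.pi := by rw [hℓdef]; field_simp
  set θ := (Real.pi - Real.sqrt lam * ℓ)/2 with hθdef
  have hθ0 : 0 < θ := by rw [hθdef]; linarith
  have hθ2 : θ < Real.pi/2 := by
    have : 0 < Real.sqrt lam * ℓ := by positivity
    rw [hθdef]; linarith
  set K := Real.sqrt lam * (Real.cos θ / Real.sin θ) with hKdef
  have hK0 : 0 ≤ K := by
    apply mul_nonneg (Real.sqrt_nonneg _)
    apply div_nonneg
    · exact Real.cos_nonneg_of_mem_Icc ⟨by linarith [Real.pi_pos], by linarith⟩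
    · exact (Real.sin_pos_of_pos_of_lt_pi hθ0 (by linarith [Real.pi_pos])).le
  apply le_csInf
  · refine ⟨((∫ x in (0:ℝ)..(2 * Real.pi), (deriv (fun _ => (1:ℝ)) x) ^ 2) +
      α * ∑ j : Fin N, ((1:ℝ)) ^ 2) / ∫ x in (0:ℝ)..(2 * Real.pi), (1:ℝ) ^ 2,
      fun _ => 1, contDiff_const, fun x => rfl, ?_, rfl⟩
    intro h
    have := congrFun h 0
    simp at this
  rintro r ⟨ψ, hsm, hper, hne, rfl⟩
  have hQ0 : 0 < ∫ x in (0:ℝ)..(2*Real.pi), ψ x ^ 2 :=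
    sq_integral_pos ψ hsm.continuous hper hne
  rw [le_div_iff₀ hQ0]
  -- the points
  set t : ℕ → ℝ := fun j => Real.pi/N + j * ℓ with ht
  have htsucc : ∀ j : ℕ, t (j+1) = t j + ℓ := by
    intro j; rw [ht]; push_cast; ring
  have htN : t N = t 0 + 2*Real.pi := by
    show Real.pi/N + (N:ℕ) * ℓ = Real.pi/N + (0:ℕ) * ℓ + 2*Real.pi
    push_cast
    rw [hℓdef]
    field_simp
    ring
  have hteq : ∀ j : Fin N, equidistantConfig N j = t j := by
    intro j; rw [ht, hℓdef, equidistantConfig]; field_simp; ring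
  -- integrability
  have hc1 : Continuous fun x => ψ x ^ 2 := hsm.continuous.pow 2
  have hc2 : Continuous fun x => (deriv ψ x) ^ 2 := (hsm.continuous_deriv (by simp)).pow 2
  have hi1 : ∀ (u v : ℝ), IntervalIntegrable (fun x => ψ x ^ 2) MeasureTheory.volume u v :=
    fun u v => hc1.intervalIntegrable u v
  have hi2 : ∀ (u v : ℝ), IntervalIntegrable (fun x => (deriv ψ x) ^ 2) MeasureTheory.volume u v :=
    fun u v => hc2.intervalIntegrable u v
  -- splitting into subintervals
  have hsum1 : ∑ j ∈ range N, ∫ x in (t j)..(t (j+1)), ψ x ^ 2 =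
      ∫ x in (0:ℝ)..(2*Real.pi), ψ x ^ 2 := by
    rw [intervalIntegral.sum_integral_adjacent_intervals (fun k _ => hi1 _ _)]
    rw [htN]
    have hperi : Function.Periodic (fun x => ψ x ^ 2) (2*Real.pi) := by
      intro x; simp [hper x]
    simpa using hperi.intervalIntegral_add_eq (t 0) 0
  have hsum2 : ∑ j ∈ range N, ∫ x in (t j)..(t (j+1)), (deriv ψ x) ^ 2 =
      ∫ x in (0:ℝ)..(2*Real.pi), (deriv ψ x) ^ 2 := by
    rw [intervalIntegral.sum_integral_adjacent_intervals (fun k _ => hi2 _ _)]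
    rw [htN]
    have hperi : Function.Periodic (fun x => (deriv ψ x) ^ 2) (2*Real.pi) := by
      intro x; simp [periodic_deriv ψ hper x]
    simpa using hperi.intervalIntegral_add_eq (t 0) 0
  -- per-interval bound
  have hper_int : ∀ j ∈ range N,
      lam * (∫ x in (t j)..(t (j+1)), ψ x ^ 2) - K * (ψ (t j) ^ 2 + ψ (t (j+1)) ^ 2)
        ≤ ∫ x in (t j)..(t (j+1)), (deriv ψ x) ^ 2 := by
    intro j _
    have := interval_lb lam ℓ hlam hℓ hs (t j) ψ hsm
    rw [htsucc j]
    exact this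
  have hsum_le := Finset.sum_le_sum hper_int
  rw [hsum2] at hsum_le
  have hexpand : ∑ j ∈ range N,
      (lam * (∫ x in (t j)..(t (j+1)), ψ x ^ 2) - K * (ψ (t j) ^ 2 + ψ (t (j+1)) ^ 2))
      = lam * (∫ x in (0:ℝ)..(2*Real.pi), ψ x ^ 2)
        - K * ((∑ j ∈ range N, ψ (t j) ^ 2) + ∑ j ∈ range N, ψ (t (j+1)) ^ 2) := by
    rw [Finset.sum_sub_distrib, ← Finset.mul_sum, hsum1, ← Finset.mul_sum]
    congr 1
    rw [← Finset.sum_add_distrib]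
  -- shifted sum equals original sum
  have hshift : ∑ j ∈ range N, ψ (t (j+1)) ^ 2 = ∑ j ∈ range N, ψ (t j) ^ 2 := by
    have h1 : ∑ j ∈ range (N+1), ψ (t j) ^ 2 =
        (∑ j ∈ range N, ψ (t (j+1)) ^ 2) + ψ (t 0) ^ 2 := Finset.sum_range_succ' _ N
    have h2 : ∑ j ∈ range (N+1), ψ (t j) ^ 2 =
        (∑ j ∈ range N, ψ (t j) ^ 2) + ψ (t N) ^ 2 := Finset.sum_range_succ _ N
    have h3 : ψ (t N) = ψ (t 0) := by rw [htN]; exact hper (t 0)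
    rw [h1, h3] at h2
    linarith
  have hteqsum : ∑ j ∈ range N, ψ (t j) ^ 2 = ∑ j : Fin N, ψ (equidistantConfig N j) ^ 2 := by
    rw [← Fin.sum_univ_eq_sum_range (fun j => ψ (t j) ^ 2)]
    exact Finset.sum_congr rfl fun j _ => by rw [hteq j]
  have hP : 0 ≤ ∑ j : Fin N, ψ (equidistantConfig N j) ^ 2 :=
    Finset.sum_nonneg fun j _ => sq_nonneg _
  rw [hexpand, hshift, hteqsum] at hsum_le
  nlinarith [hsum_le, hP, mul_le_mul_of_nonneg_right hα hP]

section Core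
variable {N : ℕ} (y : Fin N → ℝ)

-- the complex roots
noncomputable def wpt (j : Fin N) : ℂ := Complex.exp ((y j : ℂ) * I)

noncomputable def Pol : Polynomial ℂ := ∏ j, (X - C (wpt y j))

noncomputable def cf (k : ℕ) : ℂ := (Pol y).coeff k

noncomputable def Phi (x : ℝ) : ℝ := ∏ j, Real.sin ((x - y j)/2)

lemma Phi_contDiff : ContDiff ℝ (⊤ : ℕ∞) (Phi y) := by
  apply contDiff_prod
  intro j _
  exact Real.contDiff_sin.comp ((contDiff_id.sub contDiff_const).div_const 2)

lemma Phi_zero (j : Fin N) : Phi y (y j) = 0 := by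
  apply Finset.prod_eq_zero (Finset.mem_univ j)
  simp

lemma Phi_abs_le_one (x : ℝ) : |Phi y x| ≤ 1 := by
  rw [Phi, Finset.abs_prod]
  apply Finset.prod_le_one
  · intro j _; exact abs_nonneg _
  · intro j _; exact Real.abs_sin_le_one _

lemma Phi_sq_periodic (x : ℝ) : Phi y (x + 2*Real.pi) ^ 2 = Phi y x ^ 2 := by
  rw [Phi, Phi, ← Finset.prod_pow, ← Finset.prod_pow]
  apply Finset.prod_congr rfl
  intro j _
  have h : (x + 2*Real.pi - y j)/2 = (x - y j)/2 + Real.pi := by ring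
  rw [h, Real.sin_add_pi]
  ring

lemma Phi_ne_zero (hN : 2 ≤ N) (hmono : StrictMono y)
    (hmem : ∀ j, y j ∈ Set.Ico 0 (2 * Real.pi)) :
    ∃ x₀ ∈ Set.Icc (0:ℝ) (2*Real.pi), Phi y x₀ ≠ 0 := by
  have h0 : (0:ℕ) < N := by omega
  have h1 : (1:ℕ) < N := by omega
  set j0 : Fin N := ⟨0, h0⟩
  set j1 : Fin N := ⟨1, h1⟩
  have hy01 : y j0 < y j1 := hmono (by simp [j0, j1, Fin.lt_def])
  set x₀ : ℝ := (y j0 + y j1)/2 with hx₀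
  have hmem0 := hmem j0
  have hmem1 := hmem j1
  refine ⟨x₀, ⟨by simp only [hx₀]; cases hmem0; cases hmem1; linarith,
    by simp only [hx₀]; cases hmem0; cases hmem1; linarith⟩, ?_⟩
  rw [Phi, Finset.prod_ne_zero_iff]
  intro j _
  have hmemj := hmem j
  have hne : x₀ ≠ y j := by
    rcases eq_or_ne j j0 with rfl | hj
    · simp only [hx₀]; intro h; linarith
    · have : y j1 ≤ y j := by
        apply hmono.monotone
        have : (1:ℕ) ≤ (j:ℕ) := by
          rcases Nat.eq_zero_or_pos (j:ℕ) with h | h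
          · exfalso; apply hj; apply Fin.ext; simpa [j0] using h
          · exact h
        simpa [Fin.le_def, j1]
      simp only [hx₀]; intro h; linarith
  intro hs
  rw [Real.sin_eq_zero_iff] at hs
  obtain ⟨n, hn⟩ := hs
  obtain ⟨ha, hb⟩ := hmemj
  obtain ⟨ha0, hb0⟩ := hmem0
  obtain ⟨ha1, hb1⟩ := hmem1
  have hlt : |(x₀ - y j)/2| < Real.pi := by
    rw [abs_lt]
    constructor
    · simp only [hx₀]; nlinarith [Real.pi_pos]
    · simp only [hx₀]; nlinarith [Real.pi_pos]
  have hn0 : n = 0 := by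
    by_contra hnz
    have h1abs : (1:ℝ) ≤ |(n:ℝ)| := by
      have := Int.one_le_abs hnz
      exact_mod_cast this
    have : Real.pi ≤ |(x₀ - y j)/2| := by
      rw [← hn, abs_mul, abs_of_pos Real.pi_pos]
      nlinarith [Real.pi_pos]
    linarith
  rw [hn0] at hn
  push_cast at hn
  apply hne
  linarith

lemma Pol_monic : (Pol y).Monic :=
  Polynomial.monic_prod_of_monic _ _ (fun j _ => monic_X_sub_C _)

lemma Pol_natDegree : (Pol y).natDegree = N := by
  rw [Pol, Polynomial.natDegree_prod_of_monic _ _ (fun j _ => monic_X_sub_C _)]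
  simp [Polynomial.natDegree_X_sub_C]

lemma cf_N : cf y N = 1 := by
  have h := (Pol_monic y).coeff_natDegree
  rwa [Pol_natDegree y] at h

lemma csin_formula (t : ℝ) :
    ((Real.sin t : ℝ) : ℂ) = (2*I)⁻¹ * (Complex.exp ((t:ℂ) * I) - Complex.exp (-(t:ℂ) * I)) := by
  rw [Complex.ofReal_sin]
  show Complex.sin (t:ℂ) = _
  rw [Complex.sin]
  have hI : (I:ℂ) ≠ 0 := Complex.I_ne_zero
  field_simp
  ring_nf
  simp [Complex.I_sq]

lemma factor_formula (x : ℝ) (j : Fin N) :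
    ((Real.sin ((x - y j)/2) : ℝ) : ℂ) =
      (2*I)⁻¹ * Complex.exp (-(((x + y j)/2 : ℝ) : ℂ) * I) *
        (Complex.exp ((x:ℂ) * I) - wpt y j) := by
  rw [csin_formula]
  rw [mul_assoc]
  congr 1
  rw [wpt, mul_sub, ← Complex.exp_add, ← Complex.exp_add]
  congr 2 <;> · push_cast; ring

lemma Phi_identity (x : ℝ) :
    ((Phi y x : ℝ) : ℂ) =
      ((2*I)⁻¹)^N * Complex.exp (-(((N*x + ∑ j, y j)/2 : ℝ) : ℂ) * I) *
        ∑ k ∈ range (N+1), cf y k * Complex.exp ((k:ℂ) * (x:ℂ) * I) := by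
  have h1 : ((Phi y x : ℝ) : ℂ) = ∏ j, ((Real.sin ((x - y j)/2) : ℝ) : ℂ) := by
    rw [Phi]; push_cast; rfl
  rw [h1]
  have h2 : ∀ j ∈ Finset.univ, ((Real.sin ((x - y j)/2) : ℝ) : ℂ) =
      (2*I)⁻¹ * Complex.exp (-(((x + y j)/2 : ℝ) : ℂ) * I) * (Complex.exp ((x:ℂ) * I) - wpt y j) :=
    fun j _ => factor_formula y x j
  rw [Finset.prod_congr rfl h2]
  rw [Finset.prod_mul_distrib, Finset.prod_mul_distrib]
  congr 1
  · congr 1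
    · rw [Finset.prod_const, Finset.card_univ, Fintype.card_fin]
    · rw [← Complex.exp_sum]
      congr 1
      rw [← Finset.sum_mul]
      congr 1
      have hr : ∑ i : Fin N, ((x + y i)/2 : ℝ) = ((N*x + ∑ j, y j)/2 : ℝ) := by
        rw [← Finset.sum_div]
        congr 1
        rw [Finset.sum_add_distrib, Finset.sum_const, Finset.card_univ, Fintype.card_fin]
        simp [nsmul_eq_mul]
      calc ∑ i : Fin N, -((((x + y i)/2 : ℝ)) : ℂ)
          = -((∑ i : Fin N, (((x + y i)/2 : ℝ)) : ℂ)) := by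
            rw [← Finset.sum_neg_distrib]
        _ = _ := by rw [← Complex.ofReal_sum, hr]
  · have h3 : ∏ j, (Complex.exp ((x:ℂ) * I) - wpt y j) = (Pol y).eval (Complex.exp ((x:ℂ) * I)) := by
      rw [Pol, Polynomial.eval_prod]
      apply Finset.prod_congr rfl
      intro j _
      simp
    rw [h3, Polynomial.eval_eq_sum_range, Pol_natDegree]
    apply Finset.sum_congr rfl
    intro k _
    rw [cf]
    congr 1
    rw [← Complex.exp_nat_mul]
    congr 1
    ring


noncomputable def Aconst (N : ℕ) : ℂ := ((2*I)⁻¹)^N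

noncomputable def Efn (x : ℝ) : ℂ :=
  Complex.exp (-(((N*x + ∑ j, y j)/2 : ℝ) : ℂ) * I)

noncomputable def Ffn (x : ℝ) : ℂ :=
  ∑ k ∈ range (N+1), cf y k * Complex.exp ((k:ℂ) * (x:ℂ) * I)

noncomputable def Gfn (x : ℝ) : ℂ :=
  ∑ k ∈ range (N+1), ((k:ℂ) - (N:ℂ)/2) * cf y k * Complex.exp ((k:ℂ) * (x:ℂ) * I)

noncomputable def Dfn (x : ℝ) : ℂ := Aconst N * Efn y x * (I * Gfn y x)

lemma Phi_identity' (x : ℝ) :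
    ((Phi y x : ℝ) : ℂ) = Aconst N * Efn y x * Ffn y x := Phi_identity y x

lemma hasDerivAt_exp_k (k : ℕ) (x : ℝ) :
    HasDerivAt (fun x : ℝ => Complex.exp ((k:ℂ) * (x:ℂ) * I)) 
      ((k:ℂ) * I * Complex.exp ((k:ℂ) * (x:ℂ) * I)) x := by
  have h1 : HasDerivAt (fun x : ℝ => (k : ℂ) * x * I) ((k:ℂ) * I) x := by
    simpa using ((Complex.ofRealCLM.hasDerivAt (x := x)).const_mul (k : ℂ)).mul_const I
  have h2 := (Complex.hasDerivAt_exp _).comp x h1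
  simpa [mul_comm, Function.comp_def] using h2

lemma hasDerivAt_Efn (x : ℝ) :
    HasDerivAt (Efn y) (-(N:ℂ)/2 * I * Efn y x) x := by
  have h0 : HasDerivAt (fun x : ℝ => -((N*x + ∑ j, y j)/2)) (-((N:ℝ)/2)) x := by
    have := (((hasDerivAt_id x).const_mul (N:ℝ)).add_const (∑ j, y j)).div_const 2
    exact this.neg.congr_deriv (by ring)
  have h1 := (h0.ofReal_comp).mul_const I
  have h2 := (Complex.hasDerivAt_exp _).comp x h1
  have hfun : (fun x : ℝ => Complex.exp ((↑(-((N*x + ∑ j, y j)/2)) : ℂ) * I)) = Efn y := by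
    funext t
    rw [Efn]
    push_cast
    ring_nf
  rw [Function.comp_def] at h2
  rw [hfun] at h2
  have h3 : Complex.exp ((↑(-((N*x + ∑ j, y j)/2)) : ℂ) * I) = Efn y x := by
    rw [Efn]; push_cast; ring_nf
  rw [h3] at h2
  refine h2.congr_deriv (Eq.symm ?_)
  push_cast
  ring

lemma hasDerivAt_Ffn (x : ℝ) :
    HasDerivAt (Ffn y)
      (∑ k ∈ range (N+1), cf y k * ((k:ℂ) * I) * Complex.exp ((k:ℂ) * (x:ℂ) * I)) x := by
  apply HasDerivAt.fun_sum
  intro k _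
  have := (hasDerivAt_exp_k k x).const_mul (cf y k)
  refine this.congr_deriv (Eq.symm ?_)
  ring

lemma hasDerivAt_ofRealPhi (x : ℝ) :
    HasDerivAt (fun x : ℝ => ((Phi y x : ℝ) : ℂ)) (Dfn y x) x := by
  have heq : (fun x : ℝ => ((Phi y x : ℝ) : ℂ)) = fun x => Aconst N * Efn y x * Ffn y x :=
    funext (Phi_identity' y)
  rw [heq]
  have hAE : HasDerivAt (fun x => Aconst N * Efn y x)
      (Aconst N * (-(N:ℂ)/2 * I * Efn y x)) x := (hasDerivAt_Efn y x).const_mul _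
  have hprod := hAE.mul (hasDerivAt_Ffn y x)
  refine hprod.congr_deriv (Eq.symm ?_)
  rw [Dfn, Gfn, Ffn]
  simp only [Finset.mul_sum, ← Finset.sum_add_distrib]
  apply Finset.sum_congr rfl
  intro k _
  ring

lemma hasDerivAt_Phi (x : ℝ) : HasDerivAt (Phi y) ((Dfn y x).re) x := by
  have hc := hasDerivAt_ofRealPhi y x
  have := Complex.reCLM.hasFDerivAt.comp_hasDerivAt x hc
  simpa [Function.comp_def] using this

lemma Dfn_im (x : ℝ) : (Dfn y x).im = 0 := by
  have h1 := (hasDerivAt_Phi y x).ofReal_comp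
  have h2 := hasDerivAt_ofRealPhi y x
  have := h1.unique h2
  rw [← this]
  simp

lemma deriv_Phi_sq (x : ℝ) :
    (deriv (Phi y) x)^2 = Complex.normSq (Dfn y x) := by
  rw [(hasDerivAt_Phi y x).deriv, Complex.normSq_apply, Dfn_im]
  ring

lemma normSq_AE (x : ℝ) : Complex.normSq (Aconst N * Efn y x) = (1/4:ℝ)^N := by
  rw [map_mul]
  have h1 : Complex.normSq (Aconst N) = (1/4:ℝ)^N := by
    rw [Aconst, map_pow]
    congr 1
    rw [Complex.normSq_inv]
    simp [Complex.normSq_apply]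
    norm_num
  have h2 : Complex.normSq (Efn y x) = 1 := by
    rw [Efn, ← Complex.ofReal_neg, Complex.normSq_eq_norm_sq, Complex.norm_exp_ofReal_mul_I]
    norm_num
  rw [h1, h2, mul_one]

lemma Phi_sq_eq (x : ℝ) :
    (Phi y x)^2 = (1/4:ℝ)^N * Complex.normSq (Ffn y x) := by
  have h1 : (Phi y x)^2 = Complex.normSq ((Phi y x : ℝ) : ℂ) := by
    rw [Complex.normSq_ofReal]; ring
  rw [h1, Phi_identity' y x, map_mul, normSq_AE]

lemma deriv_Phi_sq_eq (x : ℝ) :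
    (deriv (Phi y) x)^2 = (1/4:ℝ)^N * Complex.normSq (Gfn y x) := by
  rw [deriv_Phi_sq, Dfn, map_mul, normSq_AE, map_mul]
  simp [Complex.normSq_I]

lemma Q0_eq : ∫ x in (0:ℝ)..(2*Real.pi), (Phi y x)^2 =
    (1/4:ℝ)^N * (2*Real.pi * ∑ k ∈ range (N+1), Complex.normSq (cf y k)) := by
  have : ∀ x : ℝ, (Phi y x)^2 = (1/4:ℝ)^N * Complex.normSq (Ffn y x) := Phi_sq_eq y
  rw [intervalIntegral.integral_congr (g := fun x => (1/4:ℝ)^N * Complex.normSq (Ffn y x))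
    (fun x _ => this x)]
  rw [intervalIntegral.integral_const_mul]
  congr 1
  exact parseval_trig (N+1) (cf y)

lemma Q1_eq : ∫ x in (0:ℝ)..(2*Real.pi), (deriv (Phi y) x)^2 =
    (1/4:ℝ)^N * (2*Real.pi * ∑ k ∈ range (N+1),
      Complex.normSq (((k:ℂ) - (N:ℂ)/2) * cf y k)) := by
  rw [intervalIntegral.integral_congr (g := fun x => (1/4:ℝ)^N * Complex.normSq (Gfn y x))
    (fun x _ => deriv_Phi_sq_eq y x)]
  rw [intervalIntegral.integral_const_mul]
  congr 1
  exact parseval_trig (N+1) (fun k => ((k:ℂ) - (N:ℂ)/2) * cf y k)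

lemma core_ineq (hN : 2 ≤ N) (hmid : ∃ k, 0 < k ∧ k < N ∧ cf y k ≠ 0) :
    ∫ x in (0:ℝ)..(2*Real.pi), (deriv (Phi y) x)^2 <
      ((N:ℝ)^2/4) * ∫ x in (0:ℝ)..(2*Real.pi), (Phi y x)^2 := by
  obtain ⟨k0, hk0pos, hk0lt, hk0ne⟩ := hmid
  have hb : ∀ k : ℕ, Complex.normSq (((k:ℂ) - (N:ℂ)/2) * cf y k) =
      ((k:ℝ) - (N:ℝ)/2)^2 * Complex.normSq (cf y k) := by
    intro k
    rw [Complex.normSq_mul]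
    congr 1
    have h : ((k:ℂ) - (N:ℂ)/2) = ((((k:ℝ) - (N:ℝ)/2) : ℝ) : ℂ) := by push_cast; ring
    rw [h, Complex.normSq_ofReal]
    ring
  have hsum : ∑ k ∈ range (N+1), Complex.normSq (((k:ℂ) - (N:ℂ)/2) * cf y k) <
      ∑ k ∈ range (N+1), ((N:ℝ)^2/4) * Complex.normSq (cf y k) := by
    apply Finset.sum_lt_sum
    · intro k hk
      rw [hb k]
      have hkN : (k:ℝ) ≤ N := by
        have := Finset.mem_range.mp hk
        exact_mod_cast Nat.lt_succ_iff.mp this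
      have hk0' : (0:ℝ) ≤ k := Nat.cast_nonneg k
      have hkk : 0 ≤ (k:ℝ) * ((N:ℝ) - k) := mul_nonneg hk0' (by linarith)
      nlinarith [mul_nonneg hkk (Complex.normSq_nonneg (cf y k))]
    · refine ⟨k0, Finset.mem_range.mpr (by omega), ?_⟩
      rw [hb k0]
      have h1 : (1:ℝ) ≤ k0 := by exact_mod_cast hk0pos
      have h2 : (k0:ℝ) ≤ (N:ℝ) - 1 := by
        have : k0 ≤ N - 1 := by omega
        have hcast : ((N - 1 : ℕ) : ℝ) = (N:ℝ) - 1 := by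
          have : 1 ≤ N := by omega
          push_cast [this]
          ring
        calc (k0:ℝ) ≤ ((N-1:ℕ):ℝ) := by exact_mod_cast ‹k0 ≤ N - 1›
          _ = (N:ℝ) - 1 := hcast
      have hpos : 0 < Complex.normSq (cf y k0) := Complex.normSq_pos.mpr hk0ne
      have hkk : 0 < (k0:ℝ) * ((N:ℝ) - k0) := mul_pos (by linarith) (by linarith)
      nlinarith [mul_pos hkk hpos]
  rw [Q0_eq, Q1_eq]
  have hP : (0:ℝ) < (1/4:ℝ)^N * (2*Real.pi) := by positivity
  have hmul := mul_lt_mul_of_pos_left hsum hP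
  have hBC : ∑ k ∈ range (N+1), ((N:ℝ)^2/4) * Complex.normSq (cf y k) =
      ((N:ℝ)^2/4) * ∑ k ∈ range (N+1), Complex.normSq (cf y k) := (Finset.mul_sum _ _ _).symm
  rw [hBC] at hmul
  calc (1/4:ℝ)^N * (2*Real.pi * ∑ k ∈ range (N+1), Complex.normSq (((k:ℂ) - (N:ℂ)/2) * cf y k))
      = ((1/4:ℝ)^N * (2*Real.pi)) * ∑ k ∈ range (N+1), Complex.normSq (((k:ℂ) - (N:ℂ)/2) * cf y k) := by
        ring
    _ < ((1/4:ℝ)^N * (2*Real.pi)) * (((N:ℝ)^2/4) * ∑ k ∈ range (N+1), Complex.normSq (cf y k)) := hmul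
    _ = ((N:ℝ)^2/4) * ((1/4:ℝ)^N * (2*Real.pi * ∑ k ∈ range (N+1), Complex.normSq (cf y k))) := by
        ring

lemma Pol_eval_simple (hN : 2 ≤ N) (h : ∀ k, 0 < k → k < N → cf y k = 0) (z : ℂ) :
    (Pol y).eval z = cf y 0 + z^N := by
  rw [Polynomial.eval_eq_sum_range, Pol_natDegree]
  have hsub : ({0, N} : Finset ℕ) ⊆ range (N+1) := by
    intro k hk
    simp only [Finset.mem_insert, Finset.mem_singleton] at hk
    rcases hk with rfl | rfl <;> simp [Finset.mem_range] <;> omega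
  rw [← Finset.sum_subset hsub]
  · rw [Finset.sum_insert (by simp; omega), Finset.sum_singleton]
    have hcfN : (Pol y).coeff N = 1 := cf_N y
    rw [hcfN]
    show (Pol y).coeff 0 * z ^ 0 + 1 * z ^ N = cf y 0 + z ^ N
    rw [cf]
    ring
  · intro k hk hks
    simp only [Finset.mem_insert, Finset.mem_singleton] at hks
    push_neg at hks
    have hkr := Finset.mem_range.mp hk
    have hz : (Pol y).coeff k = 0 := h k (by omega) (by omega)
    rw [hz, zero_mul]

lemma root_pow (hN : 2 ≤ N) (h : ∀ k, 0 < k → k < N → cf y k = 0) (j : Fin N) :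
    wpt y j ^ N = -(cf y 0) := by
  have hz : (Pol y).eval (wpt y j) = 0 := by
    rw [Pol, Polynomial.eval_prod]
    apply Finset.prod_eq_zero (Finset.mem_univ j)
    simp
  rw [Pol_eval_simple y hN h] at hz
  linear_combination hz

lemma exp_pt (hN : 2 ≤ N) (h : ∀ k, 0 < k → k < N → cf y k = 0) (j : Fin N) :
    Complex.exp (((N * y j : ℝ) : ℂ) * I) = -(cf y 0) := by
  have h1 : Complex.exp (((N * y j : ℝ) : ℂ) * I) = wpt y j ^ N := by
    rw [wpt, ← Complex.exp_nat_mul]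
    congr 1
    push_cast
    ring
  rw [h1]
  exact root_pow y hN h j

lemma periodicExt_lt (hN0 : 0 < N) (k : ℕ) (hk : k < N) :
    periodicExt y k = y ⟨k, hk⟩ := by
  rw [periodicExt, dif_pos hN0]
  have h1 : k % N = k := Nat.mod_eq_of_lt hk
  have h2 : k / N = 0 := Nat.div_eq_of_lt hk
  rw [h2]
  simp only [Nat.cast_zero, mul_zero, add_zero]
  congr 1
  exact Fin.ext h1

lemma periodicExt_N (hN0 : 0 < N) :
    periodicExt y N = y ⟨0, hN0⟩ + 2*Real.pi := by
  rw [periodicExt, dif_pos hN0]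
  have h1 : (⟨N % N, Nat.mod_lt N hN0⟩ : Fin N) = ⟨0, hN0⟩ := Fin.ext (by simp)
  rw [h1, Nat.div_self hN0]
  simp

lemma exp_periodicExt (hN : 2 ≤ N) (h : ∀ k, 0 < k → k < N → cf y k = 0)
    (k : ℕ) (hk : k ≤ N) :
    Complex.exp (((N * periodicExt y k : ℝ) : ℂ) * I) = -(cf y 0) := by
  have hN0 : 0 < N := by omega
  rcases lt_or_eq_of_le hk with hlt | heq
  · rw [periodicExt_lt y hN0 k hlt]
    exact exp_pt y hN h ⟨k, hlt⟩
  · rw [heq, periodicExt_N y hN0]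
    have hsplit : (((N : ℝ) * (y ⟨0, hN0⟩ + 2*Real.pi) : ℝ) : ℂ) * I =
        (((N : ℝ) * y ⟨0, hN0⟩ : ℝ) : ℂ) * I + (N:ℤ) * (2 * (Real.pi:ℂ) * I) := by
      push_cast
      ring
    rw [hsplit, Complex.exp_add, Complex.exp_int_mul_two_pi_mul_I, mul_one]
    exact exp_pt y hN h ⟨0, hN0⟩

lemma gap_int (hN : 2 ≤ N) (h : ∀ k, 0 < k → k < N → cf y k = 0) (j : Fin N) :
    ∃ n : ℤ, (N:ℝ) * cyclicGap y j = 2*Real.pi*n := by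
  have hj1 : (j:ℕ) + 1 ≤ N := j.isLt
  have hj0 : (j:ℕ) ≤ N := le_of_lt j.isLt
  have he : Complex.exp (((N * periodicExt y ((j:ℕ)+1) : ℝ) : ℂ) * I) =
      Complex.exp (((N * periodicExt y (j:ℕ) : ℝ) : ℂ) * I) := by
    rw [exp_periodicExt y hN h _ hj1, exp_periodicExt y hN h _ hj0]
  obtain ⟨n, hn⟩ := Complex.exp_eq_exp_iff_exists_int.mp he
  refine ⟨n, ?_⟩
  have hn' : (((N * periodicExt y ((j:ℕ)+1) : ℝ) : ℂ)) * I =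
      (((N * periodicExt y (j:ℕ) + 2*Real.pi*n : ℝ) : ℂ)) * I := by
    rw [hn]
    push_cast
    ring
  have hc := mul_right_cancel₀ Complex.I_ne_zero hn'
  have hr : (N : ℝ) * periodicExt y ((j:ℕ)+1) = N * periodicExt y (j:ℕ) + 2*Real.pi*n := by
    exact_mod_cast hc
  rw [cyclicGap]
  linarith

lemma gap_pos (hN : 2 ≤ N) (hmono : StrictMono y)
    (hmem : ∀ j, y j ∈ Set.Ico 0 (2 * Real.pi)) (j : Fin N) :
    0 < cyclicGap y j := by
  have hN0 : 0 < N := by omega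
  rcases lt_or_eq_of_le (Nat.succ_le_of_lt j.isLt) with hlt | heq
  · rw [show (j:ℕ).succ = (j:ℕ) + 1 from rfl] at hlt
    rw [cyclicGap, periodicExt_lt y hN0 _ hlt, periodicExt_lt y hN0 _ j.isLt]
    have : (⟨(j:ℕ), j.isLt⟩ : Fin N) < ⟨(j:ℕ)+1, hlt⟩ := by
      simp [Fin.lt_def]
    have := hmono this
    linarith
  · rw [show (j:ℕ).succ = (j:ℕ) + 1 from rfl] at heq
    rw [cyclicGap, heq, periodicExt_N y hN0, periodicExt_lt y hN0 _ j.isLt]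
    have h1 := (hmem ⟨(j:ℕ), j.isLt⟩).2
    have h2 := (hmem ⟨0, hN0⟩).1
    linarith

lemma gap_ge (hN : 2 ≤ N) (hmono : StrictMono y)
    (hmem : ∀ j, y j ∈ Set.Ico 0 (2 * Real.pi))
    (h : ∀ k, 0 < k → k < N → cf y k = 0) (j : Fin N) :
    2*Real.pi/N ≤ cyclicGap y j := by
  have hN0 : (0:ℝ) < N := by positivity
  obtain ⟨n, hn⟩ := gap_int y hN h j
  have hpos := gap_pos y hN hmono hmem j
  have hnpos : (0:ℝ) < n := by
    by_contra hle
    push_neg at hle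
    nlinarith [Real.pi_pos]
  have hn1 : (1:ℝ) ≤ n := by
    have : (0:ℤ) < n := by exact_mod_cast hnpos
    exact_mod_cast this
  rw [div_le_iff₀ hN0]
  nlinarith [Real.pi_pos]

lemma gap_sum : ∑ j : Fin N, cyclicGap y j = periodicExt y N - periodicExt y 0 := by
  have h : ∑ j : Fin N, cyclicGap y j =
      ∑ i ∈ range N, (periodicExt y (i+1) - periodicExt y i) :=
    Fin.sum_univ_eq_sum_range (fun i => periodicExt y (i+1) - periodicExt y i) N
  rw [h, Finset.sum_range_sub]

lemma mid_coeff (hN : 2 ≤ N) (hmono : StrictMono y)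
    (hmem : ∀ j, y j ∈ Set.Ico 0 (2 * Real.pi)) (hne : ¬ isEquidistant y) :
    ∃ k, 0 < k ∧ k < N ∧ cf y k ≠ 0 := by
  by_contra hcon
  push_neg at hcon
  have h : ∀ k, 0 < k → k < N → cf y k = 0 := fun k h1 h2 => hcon k h1 h2
  apply hne
  have hN0 : 0 < N := by omega
  have hsum : ∑ j : Fin N, cyclicGap y j = 2*Real.pi := by
    rw [gap_sum, periodicExt_N y hN0, periodicExt_lt y hN0 0 hN0]
    ring
  have hge := gap_ge y hN hmono hmem h
  intro j
  by_contra hjne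
  have hjgt : 2*Real.pi/N < cyclicGap y j := lt_of_le_of_ne (hge j) (Ne.symm hjne)
  have hlt : ∑ _i : Fin N, (2*Real.pi/(N:ℝ)) < ∑ i : Fin N, cyclicGap y i :=
    Finset.sum_lt_sum (fun i _ => hge i) ⟨j, Finset.mem_univ j, hjgt⟩
  rw [Finset.sum_const, Finset.card_univ, Fintype.card_fin, hsum] at hlt
  have : (N:ℝ) * (2*Real.pi/N) = 2*Real.pi := by
    field_simp
  rw [nsmul_eq_mul, this] at hlt
  exact lt_irrefl _ hlt


lemma lambda1_bddBelow (N : ℕ) (α : ℝ) (hα : 0 < α) (z : Fin N → ℝ) :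
    BddBelow { r : ℝ | ∃ ψ : ℝ → ℝ, ContDiff ℝ (⊤ : ℕ∞) ψ ∧ (∀ x, ψ (x + 2 * Real.pi) = ψ x) ∧ ψ ≠ 0 ∧
      r = ((∫ x in (0:ℝ)..(2 * Real.pi), (deriv ψ x) ^ 2) + α * ∑ j, (ψ (z j)) ^ 2) /
          ∫ x in (0:ℝ)..(2 * Real.pi), (ψ x) ^ 2 } := by
  refine ⟨0, ?_⟩
  rintro r ⟨ψ, hsm, hper, hne, rfl⟩
  apply div_nonneg
  · apply add_nonneg
    · apply intervalIntegral.integral_nonneg (by positivity)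
      intro x _; positivity
    · apply mul_nonneg hα.le
      apply Finset.sum_nonneg
      intro j _; positivity
  · apply intervalIntegral.integral_nonneg (by positivity)
    intro x _; positivity

lemma lambda1_lt (N : ℕ) (hN : 2 ≤ N) (y : Fin N → ℝ) (hmono : StrictMono y)
    (hmem : ∀ j, y j ∈ Set.Ico 0 (2 * Real.pi)) (lam : ℝ) (hlam : 0 < lam)
    (hQ : (∫ x in (0:ℝ)..(2*Real.pi), (deriv (Phi y) x)^2) <
      lam * ∫ x in (0:ℝ)..(2*Real.pi), (Phi y x)^2)
    (α : ℝ) (hα : 0 < α) :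
    lambda1 N α y < lam := by
  have h2pi : (0:ℝ) < 2*Real.pi := by positivity
  set Q1 := ∫ x in (0:ℝ)..(2*Real.pi), (deriv (Phi y) x)^2 with hQ1def
  set Q0 := ∫ x in (0:ℝ)..(2*Real.pi), (Phi y x)^2 with hQ0def
  have hQ1nn : 0 ≤ Q1 := by
    apply intervalIntegral.integral_nonneg (by positivity)
    intro x _; positivity
  have hQ0pos : 0 < Q0 := by
    obtain ⟨x₀, hx₀mem, hx₀⟩ := Phi_ne_zero y hN hmono hmem
    apply intervalIntegral.integral_pos h2pi
    · exact ((Phi_contDiff y).continuous.pow 2).continuousOn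
    · intro x _; positivity
    · exact ⟨x₀, hx₀mem, by positivity⟩
  set ε := (lam * Q0 - Q1) / (8 * Real.pi * lam) with hεdef
  have hεpos : 0 < ε := by
    apply div_pos (by linarith) (by positivity)
  have hden : Q0 - 2*ε*(2*Real.pi) = (lam * Q0 + Q1)/(2*lam) := by
    rw [hεdef]
    field_simp
    ring
  have hdenpos : 0 < Q0 - 2*ε*(2*Real.pi) := by
    rw [hden]; positivity
  set Ψ : ℝ → ℝ := fun x => Real.sqrt ((Phi y x)^2 + ε^2) - ε with hΨdef
  have hne0 : ∀ x : ℝ, (Phi y x)^2 + ε^2 ≠ 0 := fun x => by positivity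
  have hsmooth : ContDiff ℝ (⊤ : ℕ∞) Ψ := by
    apply ContDiff.sub _ contDiff_const
    exact ContDiff.sqrt (((Phi_contDiff y).pow 2).add contDiff_const) hne0
  have hperΨ : ∀ x, Ψ (x + 2*Real.pi) = Ψ x := by
    intro x
    simp only [hΨdef]
    rw [Phi_sq_periodic y x]
  have hΨy : ∀ j, Ψ (y j) = 0 := by
    intro j
    simp only [hΨdef]
    rw [Phi_zero y j]
    simp [Real.sqrt_sq hεpos.le]
  have hΨne : Ψ ≠ 0 := by
    obtain ⟨x₀, _, hx₀⟩ := Phi_ne_zero y hN hmono hmem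
    intro h
    have h0 : Ψ x₀ = 0 := by rw [h]; rfl
    have : ε < Real.sqrt ((Phi y x₀)^2 + ε^2) := by
      have h2 : 0 < (Phi y x₀)^2 := by positivity
      have h3 := Real.sqrt_lt_sqrt (sq_nonneg ε)
        (show ε^2 < (Phi y x₀)^2 + ε^2 by linarith)
      rwa [Real.sqrt_sq hεpos.le] at h3
    simp only [hΨdef] at h0
    linarith
  -- derivative bound
  have hderiv : ∀ x, (deriv Ψ x)^2 ≤ (deriv (Phi y) x)^2 := by
    intro x
    have hPhiD : HasDerivAt (Phi y) (deriv (Phi y) x) x :=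
      ((Phi_contDiff y).differentiable (by simp) x).hasDerivAt
    set d := deriv (Phi y) x
    have hinner : HasDerivAt (fun x => (Phi y x)^2 + ε^2) (2 * Phi y x * d) x := by
      have := (hPhiD.pow 2).add_const (ε^2)
      simpa [mul_comm, mul_assoc] using this
    have hsqrt := hinner.sqrt (hne0 x)
    have hΨD : HasDerivAt Ψ ((2 * Phi y x * d) / (2 * Real.sqrt ((Phi y x)^2 + ε^2))) x :=
      hsqrt.sub_const ε
    rw [hΨD.deriv]
    set s := Real.sqrt ((Phi y x)^2 + ε^2) with hs
    have hs2 : s^2 = (Phi y x)^2 + ε^2 := Real.sq_sqrt (by positivity)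
    have hspos : 0 < s := Real.sqrt_pos.mpr (by positivity)
    rw [div_pow]
    rw [div_le_iff₀ (by positivity)]
    have hexp : (2*s)^2 = 4 * ((Phi y x)^2 + ε^2) := by rw [mul_pow]; rw [hs2]; ring
    rw [hexp]
    nlinarith [sq_nonneg (Phi y x * d), sq_nonneg d, sq_nonneg ε, mul_nonneg (sq_nonneg d) (sq_nonneg ε)]
  -- numerator bound
  have hcΨ' : Continuous (deriv Ψ) := hsmooth.continuous_deriv (by simp)
  have hcΦ' : Continuous (deriv (Phi y)) := (Phi_contDiff y).continuous_deriv (by simp)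
  have hnum : (∫ x in (0:ℝ)..(2*Real.pi), (deriv Ψ x)^2) ≤ Q1 := by
    apply intervalIntegral.integral_mono_on h2pi.le
      ((hcΨ'.pow 2).intervalIntegrable _ _) ((hcΦ'.pow 2).intervalIntegrable _ _)
    intro x _
    exact hderiv x
  have hnumnn : 0 ≤ ∫ x in (0:ℝ)..(2*Real.pi), (deriv Ψ x)^2 := by
    apply intervalIntegral.integral_nonneg (by positivity)
    intro x _; positivity
  -- denominator bound
  have hlow : ∀ x, (Phi y x)^2 - 2*ε ≤ Ψ x ^ 2 := by
    intro x
    set s := Real.sqrt ((Phi y x)^2 + ε^2) with hs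
    have hs2 : s^2 = (Phi y x)^2 + ε^2 := Real.sq_sqrt (by positivity)
    have hsle : s ≤ |Phi y x| + ε := by
      rw [hs]
      have h1 : (Phi y x)^2 + ε^2 ≤ (|Phi y x| + ε)^2 := by
        have := abs_nonneg (Phi y x)
        nlinarith [_root_.sq_abs (Phi y x)]
      calc Real.sqrt ((Phi y x)^2 + ε^2) ≤ Real.sqrt ((|Phi y x| + ε)^2) :=
            Real.sqrt_le_sqrt h1
        _ = |Phi y x| + ε := Real.sqrt_sq (by positivity)
    have habs : |Phi y x| ≤ 1 := Phi_abs_le_one y x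
    show (Phi y x)^2 - 2*ε ≤ (s - ε)^2
    nlinarith [hεpos]
  have hΨcont : Continuous Ψ := hsmooth.continuous
  have hdenom : Q0 - 2*ε*(2*Real.pi) ≤ ∫ x in (0:ℝ)..(2*Real.pi), Ψ x ^ 2 := by
    have h1 : ∫ x in (0:ℝ)..(2*Real.pi), ((Phi y x)^2 - 2*ε) =
        Q0 - 2*ε*(2*Real.pi) := by
      rw [intervalIntegral.integral_sub ((show Continuous (fun x => Phi y x ^ 2) from (Phi_contDiff y).continuous.pow 2).intervalIntegrable _ _)
        (intervalIntegrable_const)]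
      rw [intervalIntegral.integral_const]
      simp
      ring
    rw [← h1]
    apply intervalIntegral.integral_mono_on h2pi.le
      ((((Phi_contDiff y).continuous.pow 2).sub continuous_const).intervalIntegrable _ _)
      ((hΨcont.pow 2).intervalIntegrable _ _)
    intro x _
    exact hlow x
  have hdenΨpos : 0 < ∫ x in (0:ℝ)..(2*Real.pi), Ψ x ^ 2 := lt_of_lt_of_le hdenpos hdenom
  -- membership and csInf_le
  have hmem' : ((∫ x in (0:ℝ)..(2 * Real.pi), (deriv Ψ x) ^ 2) + α * ∑ j, (Ψ (y j)) ^ 2) /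
      (∫ x in (0:ℝ)..(2 * Real.pi), (Ψ x) ^ 2) ∈
      { r : ℝ | ∃ ψ : ℝ → ℝ, ContDiff ℝ (⊤ : ℕ∞) ψ ∧ (∀ x, ψ (x + 2 * Real.pi) = ψ x) ∧ ψ ≠ 0 ∧
        r = ((∫ x in (0:ℝ)..(2 * Real.pi), (deriv ψ x) ^ 2) + α * ∑ j, (ψ (y j)) ^ 2) /
            ∫ x in (0:ℝ)..(2 * Real.pi), (ψ x) ^ 2 } :=
    ⟨Ψ, hsmooth, hperΨ, hΨne, rfl⟩
  have hle := csInf_le (lambda1_bddBelow N α hα y) hmem'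
  rw [lambda1]
  apply lt_of_le_of_lt hle
  have hsum0 : ∑ j, (Ψ (y j)) ^ 2 = 0 := by
    apply Finset.sum_eq_zero
    intro j _
    rw [hΨy j]
    ring
  rw [hsum0, mul_zero, add_zero]
  -- final: num/denom < lam
  have hstep : (∫ x in (0:ℝ)..(2*Real.pi), (deriv Ψ x)^2) /
      (∫ x in (0:ℝ)..(2*Real.pi), Ψ x ^ 2) ≤ Q1 / (Q0 - 2*ε*(2*Real.pi)) :=
    div_le_div₀ hQ1nn hnum hdenpos hdenom
  apply lt_of_le_of_lt hstep
  rw [div_lt_iff₀ hdenpos, hden]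
  have : lam * ((lam * Q0 + Q1)/(2*lam)) = (lam * Q0 + Q1)/2 := by
    field_simp
  rw [this]
  linarith

end Core

/-- Let N ≥ 2 and Y a configuration of N distinct points on the loop of
circumference 2π not congruent to the equidistant configuration Ỹ. Then there exists
α₀ > 0 such that λ₁(α, Y) < λ₁(α, Ỹ) for every α > α₀. -/
theorem loop_strong_coupling_ground_state_max (N : ℕ) (hN : 2 ≤ N)
    (y : Fin N → ℝ) (hmono : StrictMono y)
    (hmem : ∀ j, y j ∈ Set.Ico 0 (2 * Real.pi)) (hne : ¬ isEquidistant y) :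
    ∃ α₀ > (0 : ℝ), ∀ α : ℝ, α₀ < α →
      lambda1 N α y < lambda1 N α (equidistantConfig N) := by
  have hmid := mid_coeff y hN hmono hmem hne
  have hcore := core_ineq y hN hmid
  have h2pi : (0:ℝ) < 2*Real.pi := by positivity
  have hN2 : (2:ℝ) ≤ (N:ℝ) := by exact_mod_cast hN
  set Q1 := ∫ x in (0:ℝ)..(2*Real.pi), (deriv (Phi y) x)^2 with hQ1def
  set Q0 := ∫ x in (0:ℝ)..(2*Real.pi), (Phi y x)^2 with hQ0def
  have hQ1nn : 0 ≤ Q1 := by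
    apply intervalIntegral.integral_nonneg (by positivity)
    intro x _; positivity
  have hQ0pos : 0 < Q0 := by
    obtain ⟨x₀, hx₀mem, hx₀⟩ := Phi_ne_zero y hN hmono hmem
    apply intervalIntegral.integral_pos h2pi
    · exact ((Phi_contDiff y).continuous.pow 2).continuousOn
    · intro x _; positivity
    · exact ⟨x₀, hx₀mem, by positivity⟩
  set lam : ℝ := (Q1/Q0 + (N:ℝ)^2/4)/2 with hlamdef
  have hq : 0 ≤ Q1/Q0 := div_nonneg hQ1nn hQ0pos.le
  have hqlt : Q1/Q0 < (N:ℝ)^2/4 := by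
    rw [div_lt_iff₀ hQ0pos]
    calc Q1 < (N:ℝ)^2/4 * Q0 := hcore
      _ = (N:ℝ)^2/4 * Q0 := rfl
  have hlam0 : 0 < lam := by
    have : (0:ℝ) < (N:ℝ)^2/4 := by nlinarith
    rw [hlamdef]
    linarith
  have hlamlt : lam < (N:ℝ)^2/4 := by
    rw [hlamdef]; linarith
  have hQlam : Q1 < lam * Q0 := by
    have h1 : Q1/Q0 < lam := by rw [hlamdef]; linarith
    calc Q1 = (Q1/Q0) * Q0 := by field_simp
      _ < lam * Q0 := by apply mul_lt_mul_of_pos_right h1 hQ0pos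
  set K : ℝ := Real.sqrt lam *
    (Real.cos ((Real.pi - Real.sqrt lam * (2*Real.pi/N))/2) /
     Real.sin ((Real.pi - Real.sqrt lam * (2*Real.pi/N))/2)) with hKdef
  refine ⟨max 1 (2*K), lt_of_lt_of_le one_pos (le_max_left _ _), ?_⟩
  intro α hα
  have hα0 : (0:ℝ) < α := lt_trans (lt_of_lt_of_le one_pos (le_max_left _ _)) hα
  have hαK : 2*K ≤ α := le_of_lt (lt_of_le_of_lt (le_max_right _ _) hα)
  have hupper : lambda1 N α y < lam := lambda1_lt N hN y hmono hmem lam hlam0 hQlam α hα0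
  have hlower : lam ≤ lambda1 N α (equidistantConfig N) :=
    equi_lower N hN lam hlam0 hlamlt α hαK
  exact lt_of_lt_of_le hupper hlower
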